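/- The Hadamard product of Σ_n C(2n,n) t^n with the solution Σ_n c_n t^n of θ^2 - 3t(3θ+1)(3θ+2) (i.e., c_n = (3n)!/n!^3) is the series Σ_n C(2n,n)·(3n)!/n!^3 · t^n, which is annihilated by L_{3,3} = θ^3 - 6t(2θ+1)(3θ+1)(3θ+2). -/

import Mathlib

open PowerSeries

/-- The logarithmic derivative `θ = t d/dt` acting on formal power series. -/
noncomputable def theta (f : PowerSeries ℚ) : PowerSeries ℚ :=
  PowerSeries.mk fun n => (n : ℚ) * PowerSeries.coeff (R := ℚ) n f

/-- The Hadamard product `Σ C(2n,n) · (3n)!/n!^3 · t^n` of the central binomial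
series with the holomorphic solution of `θ^2 - 3t(3θ+1)(3θ+2)`. -/
noncomputable def hadamard3 : PowerSeries ℚ :=
  PowerSeries.mk fun n => ((2 * n).choose n : ℚ) * (((3 * n).factorial : ℚ) / ((n.factorial : ℚ)) ^ 3)

lemma coeff_theta (n : ℕ) (f : PowerSeries ℚ) :
    coeff (R := ℚ) n (theta f) = (n : ℚ) * coeff (R := ℚ) n f := by
  simp [theta]

lemma key (n : ℕ) :
    ((n:ℚ)+1)^3 * coeff (R := ℚ) (n+1) hadamard3
      = 6 * (2*(n:ℚ)+1) * (3*(n:ℚ)+1) * (3*(n:ℚ)+2) * coeff (R := ℚ) n hadamard3 := by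
  have hc : ((n:ℚ)+1) * ((2*(n+1)).choose (n+1) : ℚ) = 2 * (2*(n:ℚ)+1) * ((2*n).choose n : ℚ) := by
    have := Nat.succ_mul_centralBinom_succ n
    have h2 : ((n+1) * Nat.centralBinom (n+1) : ℚ) = (2 * (2*n+1) * Nat.centralBinom n : ℚ) := by
      exact_mod_cast congrArg (Nat.cast : ℕ → ℚ) this
    simpa [Nat.centralBinom] using h2
  have hf : ((3*(n+1)).factorial : ℚ) = (3*(n:ℚ)+3)*(3*(n:ℚ)+2)*(3*(n:ℚ)+1)*((3*n).factorial : ℚ) := by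
    have : 3*(n+1) = (3*n+2)+1 := by ring
    rw [this]
    rw [Nat.factorial_succ, Nat.factorial_succ, Nat.factorial_succ]
    push_cast; ring
  have hn : ((n+1).factorial : ℚ) = ((n:ℚ)+1) * (n.factorial : ℚ) := by
    rw [Nat.factorial_succ]; push_cast; ring
  simp only [hadamard3, coeff_mk, hf, hn]
  have hne : ((n:ℚ)+1) ≠ 0 := by positivity
  have hfe : (n.factorial : ℚ) ≠ 0 := by exact_mod_cast n.factorial_ne_zero
  field_simp
  linear_combination 3 * hc

/-- The Hadamard product of `Σ C(2n,n) t^n` with `Σ (3n)!/n!^3 t^n` (the solution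
of `θ^2 - 3t(3θ+1)(3θ+2)`) is annihilated by
`L_{3,3} = θ^3 - 6t(2θ+1)(3θ+1)(3θ+2)`. -/
theorem hadamard_L33_annihilated :
    theta (theta (theta hadamard3))
      - (6 : ℚ) • (X *
          ((2 : ℚ) • theta
              ((3 : ℚ) • theta ((3 : ℚ) • theta hadamard3 + (2 : ℚ) • hadamard3)
                + ((3 : ℚ) • theta hadamard3 + (2 : ℚ) • hadamard3))
            + ((3 : ℚ) • theta ((3 : ℚ) • theta hadamard3 + (2 : ℚ) • hadamard3)
                + ((3 : ℚ) • theta hadamard3 + (2 : ℚ) • hadamard3)))) = 0 := by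
  ext n
  rw [map_sub, map_smul, map_zero]
  cases n with
  | zero =>
      simp [coeff_theta]
  | succ n =>
      rw [coeff_succ_X_mul]
      simp only [map_add, map_smul, coeff_theta, smul_eq_mul]
      push_cast
      linear_combination key n
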